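/- In the compact setting described in the context, for every root α ∈ Φ the linear map σ*(α) := α ∘ σ|_𝔱 is again a root, i.e. σ*(α) ∈ Φ. Moreover: (1) if α ∈ Φ₁ ∪ Φ₂ then σ*(α) = α; and (2) if α ∈ Φ₃ then σ*(α) ≠ α and σ*(α) ≠ −α. -/

import Mathlib

open scoped TensorProduct

/-- The root space `𝔤_θ ⊆ 𝔤_ℂ = ℂ ⊗[ℝ] L` of an ℝ-linear map `θ : 𝔱 → ℂ`:
`{Z | [H, Z] = θ(H)·Z for all H ∈ 𝔱}`. -/
def rootSet {L : Type*} [LieRing L] [LieAlgebra ℝ L]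
    (t : Submodule ℝ L) (θ : t →ₗ[ℝ] ℂ) : Set (ℂ ⊗[ℝ] L) :=
  {Z | ∀ H : t, ⁅(1 : ℂ) ⊗ₜ[ℝ] (H : L), Z⁆ = θ H • Z}

/-- `θ ∈ Φ`: `θ` is a root, i.e. `θ ≠ 0` and `𝔤_θ ≠ 0`. -/
def IsRoot {L : Type*} [LieRing L] [LieAlgebra ℝ L]
    (t : Submodule ℝ L) (θ : t →ₗ[ℝ] ℂ) : Prop :=
  θ ≠ 0 ∧ ∃ Z ∈ rootSet t θ, Z ≠ 0

/-- `θ ∈ Φ₁`: `θ` is a root with `𝔤_θ ⊆ 𝔨_ℂ`. -/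
def IsRoot1 {L : Type*} [LieRing L] [LieAlgebra ℝ L]
    (t k : Submodule ℝ L) (θ : t →ₗ[ℝ] ℂ) : Prop :=
  IsRoot t θ ∧ rootSet t θ ⊆ (k.baseChange ℂ : Set (ℂ ⊗[ℝ] L))

/-- `θ ∈ Φ₂`: `θ` is a root with `𝔤_θ ⊆ 𝔭_ℂ`. -/
def IsRoot2 {L : Type*} [LieRing L] [LieAlgebra ℝ L]
    (t p : Submodule ℝ L) (θ : t →ₗ[ℝ] ℂ) : Prop :=
  IsRoot t θ ∧ rootSet t θ ⊆ (p.baseChange ℂ : Set (ℂ ⊗[ℝ] L))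

/-- `θ ∈ Φ₃ = Φ \ (Φ₁ ∪ Φ₂)`. -/
def IsRoot3 {L : Type*} [LieRing L] [LieAlgebra ℝ L]
    (t k p : Submodule ℝ L) (θ : t →ₗ[ℝ] ℂ) : Prop :=
  IsRoot t θ ∧ ¬IsRoot1 t k θ ∧ ¬IsRoot2 t p θ

/-- The involution `σ* : θ ↦ θ ∘ σ|_𝔱` on ℝ-linear maps `𝔱 → ℂ`, for a `σ`-stable
subalgebra `𝔱`. -/
noncomputable def sigmaStar {L : Type*} [LieRing L] [LieAlgebra ℝ L]
    (σ : L →ₗ⁅ℝ⁆ L) (t : Submodule ℝ L) (hσt : ∀ x ∈ t, σ x ∈ t)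
    (θ : t →ₗ[ℝ] ℂ) : t →ₗ[ℝ] ℂ :=
  θ.comp (σ.toLinearMap.restrict fun x hx => hσt x hx)

/-!
`σ_ℂ := σ ⊗ 1` maps the root space `𝔤_θ` onto `𝔤_{σ*θ}`. Hence `σ*θ` is a root, and `σ*θ = θ`
as soon as `𝔤_θ` contains an eigenvector of `σ_ℂ`, which is the case for `θ ∈ Φ₁ ∪ Φ₂`.

Since the Killing form is definite, an element normalising the maximal abelian `𝔱` centralises
it, so `𝔱_ℂ` is a Cartan subalgebra of the Killing Lie algebra `𝔤_ℂ` and every `𝔤_θ` is a line.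
If `σ*θ = θ`, the involution `σ_ℂ` preserves this line and acts on it by `±1`, so `θ ∈ Φ₁ ∪ Φ₂`.

Finally `σ*θ = -θ` is impossible: `θ` would vanish on `𝔱_K`, so for a root vector `Z` the
`σ`-fixed vector `Z + σ_ℂ Z` would centralise `𝔱_K`, hence lie in `(𝔱_K)_ℂ ⊆ 𝔱_ℂ` by maximality
of `𝔱_K` in `𝔨`. Bracketing with `𝔱` then gives `σ_ℂ Z = Z`, i.e. `θ = -θ`.
-/

open TensorProduct LieAlgebra

lemma LinearMap.baseChange_involutive {R A M : Type*} [CommRing R] [CommRing A] [Algebra R A]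
    [AddCommGroup M] [Module R M] {f : M →ₗ[R] M} (hf : Function.Involutive f) :
    Function.Involutive (f.baseChange A) := fun z => by
  rw [← comp_apply, ← baseChange_comp, show f ∘ₗ f = .id from ext hf, baseChange_id, id_apply]

section MaximalAbelian

variable {R L : Type*} [CommRing R] [LieRing L] [LieAlgebra R L]

lemma Submodule.mem_of_forall_lie_eq_zero_of_maximal {m s : Submodule R L}
    (hs : ∀ x ∈ s, ∀ y ∈ s, ⁅x, y⁆ = 0)
    (hmax : ∀ s' : Submodule R L, s' ≤ m → (∀ x ∈ s', ∀ y ∈ s', ⁅x, y⁆ = 0) → s ≤ s' → s' = s)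
    (hsm : s ≤ m) {u : L} (hu : u ∈ m) (hcomm : ∀ x ∈ s, ⁅x, u⁆ = 0) : u ∈ s := by
  have habel : ∀ x ∈ s ⊔ R ∙ u, ∀ y ∈ s ⊔ R ∙ u, ⁅x, y⁆ = 0 := by
    intro x hx y hy
    obtain ⟨a, ha, b, hb, rfl⟩ := mem_sup.mp hx
    obtain ⟨a', ha', b', hb', rfl⟩ := mem_sup.mp hy
    obtain ⟨c, rfl⟩ := mem_span_singleton.mp hb
    obtain ⟨c', rfl⟩ := mem_span_singleton.mp hb'
    simp [hs a ha a' ha', hcomm a ha, ← lie_skew u a', hcomm a' ha']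
  rw [← hmax _ (sup_le hsm ((span_singleton_le_iff_mem u m).mpr hu)) habel le_sup_left]
  exact mem_sup_right (mem_span_singleton_self u)

lemma LieAlgebra.isKilling_of_killingForm_anisotropic
    (hanis : ∀ x : L, killingForm R L x x = 0 → x = 0) : IsKilling R L where
  killingCompl_top_eq_bot := eq_bot_iff.mpr fun x hx =>
    hanis x ((LieIdeal.mem_killingCompl R L ⊤).mp hx x trivial)

/-- `⁅x, u⁆` is Killing-orthogonal to `t`, since `κ(⁅x, u⁆, w) = -κ(u, ⁅x, w⁆)`. -/
lemma lie_eq_zero_of_lie_mem (hanis : ∀ x : L, killingForm R L x x = 0 → x = 0)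
    {t : Submodule R L} (htab : ∀ x ∈ t, ∀ y ∈ t, ⁅x, y⁆ = 0) {x u : L} (hx : x ∈ t)
    (hxu : ⁅x, u⁆ ∈ t) : ⁅x, u⁆ = 0 := by
  refine hanis _ ?_
  have hskew : killingForm R L ⁅x, u⁆ = -killingForm R L ⁅u, x⁆ := by rw [← map_neg, lie_skew]
  rw [hskew, LinearMap.neg_apply, LieModule.traceForm_apply_lie_apply, htab x hx _ hxu, map_zero,
    neg_zero]

lemma Submodule.mem_of_forall_lie_mem_of_maximal
    (hanis : ∀ x : L, killingForm R L x x = 0 → x = 0) {t : Submodule R L}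
    (htab : ∀ x ∈ t, ∀ y ∈ t, ⁅x, y⁆ = 0)
    (htmax : ∀ s : Submodule R L, (∀ x ∈ s, ∀ y ∈ s, ⁅x, y⁆ = 0) → t ≤ s → s = t)
    {u : L} (hu : ∀ x ∈ t, ⁅x, u⁆ ∈ t) : u ∈ t :=
  mem_of_forall_lie_eq_zero_of_maximal htab (fun s _ => htmax s) le_top trivial
    fun x hx => lie_eq_zero_of_lie_mem hanis htab hx (hu x hx)

end MaximalAbelian

namespace Complexification

section Module

variable {L L' : Type*} [AddCommGroup L] [Module ℝ L] [AddCommGroup L'] [Module ℝ L']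

noncomputable def re : ℂ ⊗[ℝ] L →ₗ[ℝ] L :=
  (TensorProduct.lid ℝ L).toLinearMap ∘ₗ Complex.reLm.rTensor L

noncomputable def im : ℂ ⊗[ℝ] L →ₗ[ℝ] L :=
  (TensorProduct.lid ℝ L).toLinearMap ∘ₗ Complex.imLm.rTensor L

@[simp] lemma re_tmul (c : ℂ) (x : L) : re (c ⊗ₜ[ℝ] x) = c.re • x := by simp [re]

@[simp] lemma im_tmul (c : ℂ) (x : L) : im (c ⊗ₜ[ℝ] x) = c.im • x := by simp [im]

lemma one_tmul_re_add_I_tmul_im (z : ℂ ⊗[ℝ] L) : 1 ⊗ₜ re z + Complex.I ⊗ₜ im z = z := by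
  induction z using TensorProduct.induction_on with
  | zero => simp
  | tmul c x =>
    rw [re_tmul, im_tmul, tmul_smul, tmul_smul, smul_tmul', smul_tmul', ← add_tmul]
    simp [Complex.real_smul, Complex.re_add_im]
  | add z w hz hw =>
    rw [map_add, map_add, tmul_add, tmul_add, add_add_add_comm, hz, hw]

lemma I_tmul (x : L) : Complex.I ⊗ₜ[ℝ] x = Complex.I • (1 : ℂ) ⊗ₜ[ℝ] x := by
  rw [smul_tmul', smul_eq_mul, mul_one]

lemma ext {z w : ℂ ⊗[ℝ] L} (hre : re z = re w) (him : im z = im w) : z = w := by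
  rw [← one_tmul_re_add_I_tmul_im z, hre, him, one_tmul_re_add_I_tmul_im]

lemma ext_iff {z w : ℂ ⊗[ℝ] L} : z = w ↔ re z = re w ∧ im z = im w :=
  ⟨fun h => h ▸ ⟨rfl, rfl⟩, fun h => ext h.1 h.2⟩

lemma re_smul (c : ℂ) (z : ℂ ⊗[ℝ] L) : re (c • z) = c.re • re z - c.im • im z := by
  induction z using TensorProduct.induction_on with
  | zero => simp
  | tmul d x => simp [smul_tmul', smul_smul, sub_smul]
  | add z w hz hw => rw [smul_add, map_add, hz, hw, map_add, map_add]; module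

lemma im_smul (c : ℂ) (z : ℂ ⊗[ℝ] L) : im (c • z) = c.re • im z + c.im • re z := by
  induction z using TensorProduct.induction_on with
  | zero => simp
  | tmul d x => simp [smul_tmul', smul_smul, add_smul, mul_comm]
  | add z w hz hw => rw [smul_add, map_add, hz, hw, map_add, map_add]; module

@[simp] lemma re_baseChange (f : L →ₗ[ℝ] L') (z : ℂ ⊗[ℝ] L) :
    re (f.baseChange ℂ z) = f (re z) := by
  induction z using TensorProduct.induction_on <;> simp_all

@[simp] lemma im_baseChange (f : L →ₗ[ℝ] L') (z : ℂ ⊗[ℝ] L) :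
    im (f.baseChange ℂ z) = f (im z) := by
  induction z using TensorProduct.induction_on <;> simp_all

lemma mem_baseChange_iff {q : Submodule ℝ L} {z : ℂ ⊗[ℝ] L} :
    z ∈ q.baseChange ℂ ↔ re z ∈ q ∧ im z ∈ q := by
  refine ⟨fun hz => ?_, fun ⟨hre, him⟩ => ?_⟩
  · rw [Submodule.baseChange_eq_span] at hz
    induction hz using Submodule.span_induction with
    | mem w hw =>
      obtain ⟨x, hx, rfl⟩ := hw
      simpa using hx
    | zero => simp
    | add z w _ _ hz hw => simpa using ⟨q.add_mem hz.1 hw.1, q.add_mem hz.2 hw.2⟩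
    | smul c z _ hz =>
      rw [re_smul, im_smul]
      exact ⟨q.sub_mem (q.smul_mem _ hz.1) (q.smul_mem _ hz.2),
        q.add_mem (q.smul_mem _ hz.2) (q.smul_mem _ hz.1)⟩
  · rw [← one_tmul_re_add_I_tmul_im z]
    exact add_mem (q.tmul_mem_baseChange_of_mem _ hre) (q.tmul_mem_baseChange_of_mem _ him)

lemma mem_baseChange_iff_baseChange_apply_eq {q : Submodule ℝ L} {f : L →ₗ[ℝ] L}
    (hq : ∀ x, x ∈ q ↔ f x = x) (z : ℂ ⊗[ℝ] L) :
    z ∈ q.baseChange ℂ ↔ f.baseChange ℂ z = z := by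
  simp [mem_baseChange_iff, hq, ext_iff]

lemma mem_baseChange_iff_baseChange_apply_eq_neg {q : Submodule ℝ L} {f : L →ₗ[ℝ] L}
    (hq : ∀ x, x ∈ q ↔ f x = -x) (z : ℂ ⊗[ℝ] L) :
    z ∈ q.baseChange ℂ ↔ f.baseChange ℂ z = -z := by
  simp [mem_baseChange_iff, hq, ext_iff]

end Module

variable {L : Type*} [LieRing L] [LieAlgebra ℝ L]

lemma ad_one_tmul (x : L) : ad ℂ (ℂ ⊗[ℝ] L) ((1 : ℂ) ⊗ₜ[ℝ] x) = (ad ℝ L x).baseChange ℂ :=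
  LieModule.toEnd_baseChange ℝ ℂ L L x

lemma lie_one_tmul (x : L) (z : ℂ ⊗[ℝ] L) :
    ⁅(1 : ℂ) ⊗ₜ[ℝ] x, z⁆ = (ad ℝ L x).baseChange ℂ z :=
  LinearMap.congr_fun (ad_one_tmul x) z

@[simp] lemma re_lie_one_tmul (x : L) (z : ℂ ⊗[ℝ] L) : re ⁅(1 : ℂ) ⊗ₜ[ℝ] x, z⁆ = ⁅x, re z⁆ := by
  rw [lie_one_tmul, re_baseChange, ad_apply]

@[simp] lemma im_lie_one_tmul (x : L) (z : ℂ ⊗[ℝ] L) : im ⁅(1 : ℂ) ⊗ₜ[ℝ] x, z⁆ = ⁅x, im z⁆ := by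
  rw [lie_one_tmul, im_baseChange, ad_apply]

lemma ad_eq (z : ℂ ⊗[ℝ] L) : ad ℂ (ℂ ⊗[ℝ] L) z =
    (ad ℝ L (re z)).baseChange ℂ + Complex.I • (ad ℝ L (im z)).baseChange ℂ := by
  conv_lhs => rw [← one_tmul_re_add_I_tmul_im z]
  rw [map_add, I_tmul, map_smul, ad_one_tmul, ad_one_tmul]

lemma killingForm_one_tmul [Module.Finite ℝ L] (x y : L) :
    killingForm ℂ (ℂ ⊗[ℝ] L) (1 ⊗ₜ x) (1 ⊗ₜ y) = killingForm ℝ L x y := by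
  simp [killingForm]

instance [Module.Finite ℝ L] [IsKilling ℝ L] : IsKilling ℂ (ℂ ⊗[ℝ] L) where
  killingCompl_top_eq_bot := by
    refine eq_bot_iff.mpr fun z hz => ?_
    have horth (y : L) : killingForm ℝ L y (re z) = 0 ∧ killingForm ℝ L y (im z) = 0 := by
      have h := (LieIdeal.mem_killingCompl ℂ _ ⊤).mp hz (1 ⊗ₜ y) trivial
      rw [← one_tmul_re_add_I_tmul_im z, I_tmul, map_add, map_smul, killingForm_one_tmul,
        killingForm_one_tmul] at h
      simpa using And.intro (congrArg Complex.re h) (congrArg Complex.im h)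
    have hker (x : L) (hx : ∀ y, killingForm ℝ L y x = 0) : x = 0 := by
      rw [← Submodule.mem_bot ℝ, ← IsKilling.ker_killingForm_eq_bot ℝ L, LinearMap.mem_ker]
      ext y
      rw [LieModule.traceForm_comm]
      exact hx y
    exact (LieSubmodule.mem_bot z).mpr (ext (by simpa using hker _ fun y => (horth y).1)
      (by simpa using hker _ fun y => (horth y).2))

lemma lie_one_tmul_eq_zero_of_mem_baseChange {s : Submodule ℝ L}
    (hs : ∀ x ∈ s, ∀ y ∈ s, ⁅x, y⁆ = 0) {x : L} (hx : x ∈ s) {z : ℂ ⊗[ℝ] L}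
    (hz : z ∈ s.baseChange ℂ) : ⁅(1 : ℂ) ⊗ₜ[ℝ] x, z⁆ = 0 := by
  rw [mem_baseChange_iff] at hz
  exact ext (by simp [hs x hx _ hz.1]) (by simp [hs x hx _ hz.2])

lemma lie_eq_zero_of_mem_baseChange {s : Submodule ℝ L} (hs : ∀ x ∈ s, ∀ y ∈ s, ⁅x, y⁆ = 0)
    {z w : ℂ ⊗[ℝ] L} (hz : z ∈ s.baseChange ℂ) (hw : w ∈ s.baseChange ℂ) : ⁅z, w⁆ = 0 := by
  rw [mem_baseChange_iff] at hz
  rw [← ad_apply (R := ℂ), ad_eq, LinearMap.add_apply, LinearMap.smul_apply, ← lie_one_tmul,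
    ← lie_one_tmul, lie_one_tmul_eq_zero_of_mem_baseChange hs hz.1 hw,
    lie_one_tmul_eq_zero_of_mem_baseChange hs hz.2 hw, smul_zero, add_zero]

lemma mem_baseChange_of_forall_lie_eq_zero_of_maximal {m s : Submodule ℝ L}
    (hs : ∀ x ∈ s, ∀ y ∈ s, ⁅x, y⁆ = 0)
    (hmax : ∀ s' : Submodule ℝ L, s' ≤ m → (∀ x ∈ s', ∀ y ∈ s', ⁅x, y⁆ = 0) → s ≤ s' → s' = s)
    (hsm : s ≤ m) {z : ℂ ⊗[ℝ] L} (hz : z ∈ m.baseChange ℂ)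
    (hcomm : ∀ x ∈ s, ⁅(1 : ℂ) ⊗ₜ[ℝ] x, z⁆ = 0) : z ∈ s.baseChange ℂ := by
  rw [mem_baseChange_iff] at hz ⊢
  have hcomm_re_im x (hx : x ∈ s) : ⁅x, re z⁆ = 0 ∧ ⁅x, im z⁆ = 0 := by
    simpa using ext_iff.mp (hcomm x hx)
  exact ⟨Submodule.mem_of_forall_lie_eq_zero_of_maximal hs hmax hsm hz.1
      fun x hx => (hcomm_re_im x hx).1,
    Submodule.mem_of_forall_lie_eq_zero_of_maximal hs hmax hsm hz.2
      fun x hx => (hcomm_re_im x hx).2⟩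

variable (t : Submodule ℝ L) (htab : ∀ x ∈ t, ∀ y ∈ t, ⁅x, y⁆ = 0)

/-- `𝔱_ℂ`, a Lie subalgebra because `𝔱` is abelian. -/
noncomputable def abelianSubalgebra : LieSubalgebra ℂ (ℂ ⊗[ℝ] L) :=
  { t.baseChange ℂ with
    lie_mem' := fun hz hw => by
      rw [lie_eq_zero_of_mem_baseChange htab hz hw]
      exact (t.baseChange ℂ).zero_mem }

instance : IsLieAbelian (abelianSubalgebra t htab) :=
  ⟨fun z w => Subtype.ext (lie_eq_zero_of_mem_baseChange htab z.2 w.2)⟩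

lemma isCartanSubalgebra_abelianSubalgebra (hanis : ∀ x : L, killingForm ℝ L x x = 0 → x = 0)
    (htmax : ∀ s : Submodule ℝ L, (∀ x ∈ s, ∀ y ∈ s, ⁅x, y⁆ = 0) → t ≤ s → s = t) :
    (abelianSubalgebra t htab).IsCartanSubalgebra where
  nilpotent := inferInstance
  self_normalizing := by
    refine le_antisymm (fun z hz => ?_) (LieSubalgebra.le_normalizer _)
    have hlie x (hx : x ∈ t) : ⁅x, re z⁆ ∈ t ∧ ⁅x, im z⁆ ∈ t := by
      have h := (LieSubalgebra.mem_normalizer_iff' _ z).mp hz _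
        (t.tmul_mem_baseChange_of_mem (1 : ℂ) hx)
      rw [← ad_apply (R := ℂ), ad_one_tmul, ← lie_one_tmul] at h
      simpa [abelianSubalgebra, mem_baseChange_iff] using h
    exact mem_baseChange_iff.mpr
      ⟨Submodule.mem_of_forall_lie_mem_of_maximal hanis htab htmax fun x hx => (hlie x hx).1,
        Submodule.mem_of_forall_lie_mem_of_maximal hanis htab htmax fun x hx => (hlie x hx).2⟩

end Complexification

open Complexification

section RootSet

variable {L : Type*} [LieRing L] [LieAlgebra ℝ L] {t : Submodule ℝ L}

lemma smul_mem_rootSet {θ : t →ₗ[ℝ] ℂ} {Z : ℂ ⊗[ℝ] L} (c : ℂ) (hZ : Z ∈ rootSet t θ) :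
    c • Z ∈ rootSet t θ := fun H => by
  rw [lie_one_tmul, map_smul, ← lie_one_tmul, hZ H, smul_comm]

lemma eq_of_mem_rootSet {θ θ' : t →ₗ[ℝ] ℂ} {Z : ℂ ⊗[ℝ] L} (hZ : Z ∈ rootSet t θ)
    (hZ' : Z ∈ rootSet t θ') (hZ0 : Z ≠ 0) : θ = θ' := by
  ext H
  have h : (θ H - θ' H) • Z = 0 := by rw [sub_smul, ← hZ H, ← hZ' H, sub_self]
  exact sub_eq_zero.mp ((smul_eq_zero.mp h).resolve_right hZ0)

lemma ad_apply_eq_smul_of_mem_rootSet {θ : t →ₗ[ℝ] ℂ} {h W : ℂ ⊗[ℝ] L}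
    (hh : h ∈ t.baseChange ℂ) (hW : W ∈ rootSet t θ) :
    ad ℂ (ℂ ⊗[ℝ] L) h W = (θ ⟨re h, (mem_baseChange_iff.mp hh).1⟩ +
      Complex.I * θ ⟨im h, (mem_baseChange_iff.mp hh).2⟩) • W := by
  have hre := hW ⟨re h, (mem_baseChange_iff.mp hh).1⟩
  have him := hW ⟨im h, (mem_baseChange_iff.mp hh).2⟩
  rw [Submodule.coe_mk] at hre him
  rw [ad_eq, LinearMap.add_apply, LinearMap.smul_apply, ← lie_one_tmul, ← lie_one_tmul, hre, him,
    add_smul, mul_smul]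

lemma exists_eq_smul_of_mem_rootSet [Module.Finite ℝ L] [IsKilling ℝ L]
    {htab : ∀ x ∈ t, ∀ y ∈ t, ⁅x, y⁆ = 0} [(abelianSubalgebra t htab).IsCartanSubalgebra]
    {θ : t →ₗ[ℝ] ℂ} (hθ : θ ≠ 0) {X Y : ℂ ⊗[ℝ] L} (hX : X ∈ rootSet t θ) (hX0 : X ≠ 0)
    (hY : Y ∈ rootSet t θ) : ∃ c : ℂ, Y = c • X := by
  set H := abelianSubalgebra t htab
  -- the `ℂ`-linear extension of `θ` to `𝔱_ℂ`
  let χ : H → ℂ := fun h => θ ⟨re (h : ℂ ⊗[ℝ] L), (mem_baseChange_iff.mp h.2).1⟩ +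
    Complex.I * θ ⟨im (h : ℂ ⊗[ℝ] L), (mem_baseChange_iff.mp h.2).2⟩
  have hmem {W : ℂ ⊗[ℝ] L} (hW : W ∈ rootSet t θ) : W ∈ rootSpace H χ := by
    rw [LieModule.mem_genWeightSpace]
    intro h
    exact ⟨1, by simpa [sub_eq_zero] using ad_apply_eq_smul_of_mem_rootSet h.2 hW⟩
  let α : LieModule.Weight ℂ H (ℂ ⊗[ℝ] L) :=
    ⟨χ, fun hbot => hX0 (by simpa [hbot] using hmem hX)⟩
  have hα : α.IsNonZero := by
    obtain ⟨H₁, hH₁⟩ : ∃ H₁, θ H₁ ≠ 0 := by simpa [LinearMap.ext_iff] using hθ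
    intro h0
    apply hH₁
    have hzero : (⟨0, t.zero_mem⟩ : t) = 0 := rfl
    simpa [α, χ, hzero] using congrFun h0 ⟨1 ⊗ₜ H₁, t.tmul_mem_baseChange_of_mem _ H₁.2⟩
  obtain ⟨c, hc⟩ := (finrank_eq_one_iff_of_nonzero' (⟨X, hmem hX⟩ : rootSpace H α)
    (by simpa using hX0)).mp (IsKilling.finrank_rootSpace_eq_one α hα) ⟨Y, hmem hY⟩
  exact ⟨c, by simpa using congrArg Subtype.val hc.symm⟩

end RootSet

section SigmaStar

variable {L : Type*} [LieRing L] [LieAlgebra ℝ L] {t k p : Submodule ℝ L} {σ : L →ₗ⁅ℝ⁆ L}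
  (hσt : ∀ x ∈ t, σ x ∈ t)

@[simp] lemma sigmaStar_apply (θ : t →ₗ[ℝ] ℂ) (H : t) :
    sigmaStar σ t hσt θ H = θ ⟨σ H, hσt _ H.2⟩ := rfl

lemma sigmaStar_sigmaStar (hσ : Function.Involutive σ) (θ : t →ₗ[ℝ] ℂ) :
    sigmaStar σ t hσt (sigmaStar σ t hσt θ) = θ := by
  ext H
  simp [hσ _]

lemma baseChange_mem_rootSet_sigmaStar (hσ : Function.Involutive σ) {θ : t →ₗ[ℝ] ℂ}
    {Z : ℂ ⊗[ℝ] L} (hZ : Z ∈ rootSet t θ) :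
    (σ : L →ₗ[ℝ] L).baseChange ℂ Z ∈ rootSet t (sigmaStar σ t hσt θ) := fun H => by
  have hconj : ad ℝ L H ∘ₗ σ = σ ∘ₗ ad ℝ L (σ H) := by
    ext y
    simp [hσ _]
  rw [lie_one_tmul, ← LinearMap.comp_apply, ← LinearMap.baseChange_comp, hconj,
    LinearMap.baseChange_comp, LinearMap.comp_apply, ← lie_one_tmul, hZ ⟨σ H, hσt _ H.2⟩,
    map_smul, sigmaStar_apply]

lemma isRoot_sigmaStar (hσ : Function.Involutive σ) {θ : t →ₗ[ℝ] ℂ} (hθ : IsRoot t θ) :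
    IsRoot t (sigmaStar σ t hσt θ) := by
  obtain ⟨hθ0, Z, hZ, hZ0⟩ := hθ
  refine ⟨fun h => hθ0 ?_, _, baseChange_mem_rootSet_sigmaStar hσt hσ hZ, fun h => hZ0 ?_⟩
  · rw [← sigmaStar_sigmaStar hσt hσ θ, h]
    ext
    simp
  · exact (map_eq_zero_iff _ (LinearMap.baseChange_involutive hσ).injective).mp h

lemma sigmaStar_eq_of_baseChange_eq_smul (hσ : Function.Involutive σ) {θ : t →ₗ[ℝ] ℂ}
    {Z : ℂ ⊗[ℝ] L} (hZ : Z ∈ rootSet t θ) (hZ0 : Z ≠ 0) {c : ℂ} (hc : c ≠ 0)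
    (hσZ : (σ : L →ₗ[ℝ] L).baseChange ℂ Z = c • Z) : sigmaStar σ t hσt θ = θ := by
  have h := smul_mem_rootSet c⁻¹ (baseChange_mem_rootSet_sigmaStar hσt hσ hZ)
  rw [hσZ, inv_smul_smul₀ hc] at h
  exact eq_of_mem_rootSet h hZ hZ0

lemma sigmaStar_eq_of_isRoot1 (hσ : Function.Involutive σ) (hk : ∀ x, x ∈ k ↔ σ x = x)
    {θ : t →ₗ[ℝ] ℂ} (hθ : IsRoot1 t k θ) : sigmaStar σ t hσt θ = θ := by
  obtain ⟨⟨-, Z, hZ, hZ0⟩, hsub⟩ := hθ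
  refine sigmaStar_eq_of_baseChange_eq_smul hσt hσ hZ hZ0 one_ne_zero ?_
  rw [one_smul, ← mem_baseChange_iff_baseChange_apply_eq (f := σ.toLinearMap) hk]
  exact hsub hZ

lemma sigmaStar_eq_of_isRoot2 (hσ : Function.Involutive σ) (hp : ∀ x, x ∈ p ↔ σ x = -x)
    {θ : t →ₗ[ℝ] ℂ} (hθ : IsRoot2 t p θ) : sigmaStar σ t hσt θ = θ := by
  obtain ⟨⟨-, Z, hZ, hZ0⟩, hsub⟩ := hθ
  refine sigmaStar_eq_of_baseChange_eq_smul hσt hσ hZ hZ0 (neg_ne_zero.mpr one_ne_zero) ?_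
  rw [neg_one_smul, ← mem_baseChange_iff_baseChange_apply_eq_neg (f := σ.toLinearMap) hp]
  exact hsub hZ

lemma rootSet_subset_or_of_sigmaStar_eq [Module.Finite ℝ L] [IsKilling ℝ L]
    {htab : ∀ x ∈ t, ∀ y ∈ t, ⁅x, y⁆ = 0} [(abelianSubalgebra t htab).IsCartanSubalgebra]
    (hσ : Function.Involutive σ) (hk : ∀ x, x ∈ k ↔ σ x = x) (hp : ∀ x, x ∈ p ↔ σ x = -x)
    {θ : t →ₗ[ℝ] ℂ} (hθ : IsRoot t θ) (hfix : sigmaStar σ t hσt θ = θ) :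
    rootSet t θ ⊆ k.baseChange ℂ ∨ rootSet t θ ⊆ p.baseChange ℂ := by
  obtain ⟨hθ0, X, hX, hX0⟩ := hθ
  set σℂ := (σ : L →ₗ[ℝ] L).baseChange ℂ
  obtain ⟨c, hc⟩ := exists_eq_smul_of_mem_rootSet (htab := htab) hθ0 hX hX0
    (hfix ▸ baseChange_mem_rootSet_sigmaStar hσt hσ hX)
  have hσY {Y : ℂ ⊗[ℝ] L} (hY : Y ∈ rootSet t θ) : σℂ Y = c • Y := by
    obtain ⟨d, rfl⟩ := exists_eq_smul_of_mem_rootSet (htab := htab) hθ0 hX hX0 hY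
    rw [map_smul, hc, smul_comm]
  have hc2 : c * c = 1 := by
    refine smul_left_injective ℂ hX0 (show (c * c) • X = (1 : ℂ) • X from ?_)
    rw [mul_smul, ← hc, ← map_smul, ← hc, LinearMap.baseChange_involutive hσ X, one_smul]
  rcases mul_self_eq_one_iff.mp hc2 with rfl | rfl
  · refine Or.inl fun Y hY => ?_
    rw [SetLike.mem_coe, mem_baseChange_iff_baseChange_apply_eq (f := σ.toLinearMap) hk, hσY hY,
      one_smul]
  · refine Or.inr fun Y hY => ?_
    rw [SetLike.mem_coe, mem_baseChange_iff_baseChange_apply_eq_neg (f := σ.toLinearMap) hp,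
      hσY hY, neg_one_smul]

lemma sigmaStar_ne_neg (hσ : Function.Involutive σ) (hk : ∀ x, x ∈ k ↔ σ x = x)
    (htab : ∀ x ∈ t, ∀ y ∈ t, ⁅x, y⁆ = 0)
    (htKmax : ∀ s : Submodule ℝ L, s ≤ k → (∀ x ∈ s, ∀ y ∈ s, ⁅x, y⁆ = 0) → t ⊓ k ≤ s →
      s = t ⊓ k)
    {θ : t →ₗ[ℝ] ℂ} (hθ : IsRoot t θ) : sigmaStar σ t hσt θ ≠ -θ := by
  intro hneg
  obtain ⟨hθ0, Z, hZ, hZ0⟩ := hθ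
  set σℂ := (σ : L →ₗ[ℝ] L).baseChange ℂ
  have hσZ : σℂ Z ∈ rootSet t (-θ) := hneg ▸ baseChange_mem_rootSet_sigmaStar hσt hσ hZ
  have hvanish (H : t) (hH : (H : L) ∈ k) : θ H = 0 := by
    have h := LinearMap.congr_fun hneg H
    rw [sigmaStar_apply, LinearMap.neg_apply,
      show (⟨σ H, _⟩ : t) = H from Subtype.ext ((hk _).mp hH)] at h
    exact self_eq_neg.mp h
  have hbracket (H : t) : ⁅(1 : ℂ) ⊗ₜ[ℝ] (H : L), Z + σℂ Z⁆ = θ H • (Z - σℂ Z) := by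
    rw [lie_one_tmul, map_add, ← lie_one_tmul, ← lie_one_tmul, hZ H, hσZ H,
      LinearMap.neg_apply, neg_smul, smul_sub, sub_eq_add_neg]
  have hWk : Z + σℂ Z ∈ k.baseChange ℂ := by
    rw [mem_baseChange_iff_baseChange_apply_eq (f := σ.toLinearMap) hk, map_add,
      LinearMap.baseChange_involutive hσ Z, add_comm]
  have hWt : Z + σℂ Z ∈ t.baseChange ℂ :=
    Submodule.baseChange_mono ℂ inf_le_left <|
      mem_baseChange_of_forall_lie_eq_zero_of_maximal (s := t ⊓ k)
        (fun x hx y hy => htab x hx.1 y hy.1) htKmax inf_le_right hWk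
        fun x hx => by rw [hbracket ⟨x, hx.1⟩, hvanish _ hx.2, zero_smul]
  obtain ⟨H, hH⟩ : ∃ H, θ H ≠ 0 := by simpa [LinearMap.ext_iff] using hθ0
  have hσZ_eq : σℂ Z = Z := by
    have h := hbracket H
    rw [lie_one_tmul_eq_zero_of_mem_baseChange htab H.2 hWt] at h
    exact (sub_eq_zero.mp ((smul_eq_zero.mp h.symm).resolve_left hH)).symm
  have hθneg := eq_of_mem_rootSet hZ (hσZ_eq ▸ hσZ) hZ0
  exact hθ0 (LinearMap.ext fun H => self_eq_neg.mp (LinearMap.congr_fun hθneg H))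

end SigmaStar

theorem stmt_13_general (L : Type*) [LieRing L] [LieAlgebra ℝ L] [Module.Finite ℝ L]
    (hkill : ∀ x : L, x ≠ 0 → killingForm ℝ L x x < 0)
    (σ : L →ₗ⁅ℝ⁆ L) (hσinv : ∀ x, σ (σ x) = x)
    (k p : Submodule ℝ L)
    (hk : ∀ x, x ∈ k ↔ σ x = x) (hp : ∀ x, x ∈ p ↔ σ x = -x)
    (t : Submodule ℝ L)
    (htab : ∀ x ∈ t, ∀ y ∈ t, ⁅x, y⁆ = 0)
    (htmax : ∀ s : Submodule ℝ L, (∀ x ∈ s, ∀ y ∈ s, ⁅x, y⁆ = 0) → t ≤ s → s = t)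
    (hσt : ∀ x ∈ t, σ x ∈ t)
    (tK : Submodule ℝ L) (htK : tK = t ⊓ k)
    (htKmax : ∀ s : Submodule ℝ L, s ≤ k → (∀ x ∈ s, ∀ y ∈ s, ⁅x, y⁆ = 0) → tK ≤ s → s = tK) :
    ∀ α : t →ₗ[ℝ] ℂ, IsRoot t α →
      IsRoot t (sigmaStar σ t hσt α) ∧
      ((IsRoot1 t k α ∨ IsRoot2 t p α) → sigmaStar σ t hσt α = α) ∧
      (IsRoot3 t k p α → sigmaStar σ t hσt α ≠ α ∧ sigmaStar σ t hσt α ≠ -α) := by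
  intro α hα
  subst htK
  have hanis (x : L) (hx : killingForm ℝ L x x = 0) : x = 0 := by
    by_contra hx0
    exact (hkill x hx0).ne hx
  have := LieAlgebra.isKilling_of_killingForm_anisotropic hanis
  have := isCartanSubalgebra_abelianSubalgebra t htab hanis htmax
  refine ⟨isRoot_sigmaStar hσt hσinv hα, ?_, ?_⟩
  · rintro (h1 | h2)
    exacts [sigmaStar_eq_of_isRoot1 hσt hσinv hk h1, sigmaStar_eq_of_isRoot2 hσt hσinv hp h2]
  · rintro ⟨-, hn1, hn2⟩
    refine ⟨fun hfix => ?_, sigmaStar_ne_neg hσt hσinv hk htab htKmax hα⟩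
    rcases rootSet_subset_or_of_sigmaStar_eq hσt hσinv hk hp hα hfix with h | h
    exacts [hn1 ⟨hα, h⟩, hn2 ⟨hα, h⟩]

/-- In the compact setting (`𝔤` a finite-dimensional real Lie algebra with
negative definite Killing form, `σ` an involutive automorphism with fixed subalgebra `𝔨` and
`(−1)`-eigenspace `𝔭`, `𝔱` a `σ`-stable maximal abelian subalgebra with `𝔱_K = 𝔱 ∩ 𝔨` maximal
abelian in `𝔨` and `𝔱₀ = 𝔱 ∩ 𝔭`), for every root `α ∈ Φ` the map `σ*(α) = α ∘ σ|_𝔱` is again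
a root; moreover (1) if `α ∈ Φ₁ ∪ Φ₂` then `σ*(α) = α`, and (2) if `α ∈ Φ₃` then
`σ*(α) ≠ α` and `σ*(α) ≠ −α`. -/
theorem stmt_13 (L : Type*) [LieRing L] [LieAlgebra ℝ L] [Module.Finite ℝ L]
    (hkill : ∀ x : L, x ≠ 0 → killingForm ℝ L x x < 0)
    (σ : L →ₗ⁅ℝ⁆ L) (hσinv : ∀ x, σ (σ x) = x)
    (k p : Submodule ℝ L)
    (hk : ∀ x, x ∈ k ↔ σ x = x) (hp : ∀ x, x ∈ p ↔ σ x = -x)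
    (t : Submodule ℝ L)
    (htab : ∀ x ∈ t, ∀ y ∈ t, ⁅x, y⁆ = 0)
    (htmax : ∀ s : Submodule ℝ L, (∀ x ∈ s, ∀ y ∈ s, ⁅x, y⁆ = 0) → t ≤ s → s = t)
    (hσt : ∀ x ∈ t, σ x ∈ t)
    (tK t0 : Submodule ℝ L) (htK : tK = t ⊓ k) (ht0 : t0 = t ⊓ p)
    (htKmax : ∀ s : Submodule ℝ L, s ≤ k → (∀ x ∈ s, ∀ y ∈ s, ⁅x, y⁆ = 0) → tK ≤ s → s = tK) :
    ∀ α : t →ₗ[ℝ] ℂ, IsRoot t α →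
      IsRoot t (sigmaStar σ t hσt α) ∧
      ((IsRoot1 t k α ∨ IsRoot2 t p α) → sigmaStar σ t hσt α = α) ∧
      (IsRoot3 t k p α → sigmaStar σ t hσt α ≠ α ∧ sigmaStar σ t hσt α ≠ -α) :=
  stmt_13_general L hkill σ hσinv k p hk hp t htab htmax hσt tK htK htKmax
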